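/- arXiv:2209.06490 — 2 statements merged into one kernel-verified Lean document; each statement's English description precedes it below -/
import Mathlib

section
/- Let A be a unital complex Banach algebra, let D, η ∈ A, let d ∈ ℝ be a scalar, and set h := d·1 + η. Then cosh(ηD)·sinh(Dd) + sinh(ηD)·cosh(Dd) = sinh(hD), where cosh(ηD) := Σ_{n≥0} η^{2n}D^{2n}/(2n)!, sinh(ηD) := Σ_{n≥0} η^{2n+1}D^{2n+1}/(2n+1)!, cosh(Dd) := Σ_{n≥0} d^{2n}D^{2n}/(2n)!, sinh(Dd) := Σ_{n≥0} d^{2n+1}D^{2n+1}/(2n+1)!, and sinh(hD) := Σ_{n≥0} h^{2n+1}D^{2n+1}/(2n+1)! (all series converge absolutely; the order of the factors matters since D and η need not commute). -/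
/-!
Write `E(x) = ∑ xⁿDⁿ/n!` for the reverse-ordered exponential, so that `cosh(xD)` and `sinh(xD)`
are its even and odd parts. Since the scalar `d` commutes with `η`, the Cauchy product of
`E(η)` and `exp(dD)` collapses by the binomial theorem to `E(d + η)`:
`(ηⁱDⁱ)(dʲDʲ) = (ηⁱdʲ)Dⁱ⁺ʲ`. The odd part of a Cauchy product is `even · odd + odd · even`,
which is read off by comparing the product with the product of the alternating series
`∑ (-1)ⁿ fₙ · ∑ (-1)ⁿ gₙ` and dividing by `2`.
-/

open scoped Nat

section Binomial

open Finset

variable {𝕜 A : Type*} [Field 𝕜] [CharZero 𝕜] [Ring A] [Algebra 𝕜 A]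

theorem inv_factorial_smul_add_pow_mul_pow (x D : A) (c : 𝕜) (k : ℕ) :
    (k ! : 𝕜)⁻¹ • ((c • (1 : A) + x) ^ k * D ^ k) =
      ∑ ij ∈ antidiagonal k, ((ij.1 ! : 𝕜)⁻¹ • (x ^ ij.1 * D ^ ij.1)) *
        ((c ^ ij.2 / ij.2 ! : 𝕜) • D ^ ij.2) := by
  rw [add_comm, ((Commute.one_right x).smul_right c).add_pow', sum_mul, smul_sum]
  refine sum_congr rfl fun ⟨i, j⟩ hij => ?_
  obtain rfl : i + j = k := mem_antidiagonal.mp hij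
  rw [← Nat.cast_smul_eq_nsmul 𝕜, Nat.cast_add_choose, smul_pow, one_pow, pow_add D]
  simp only [smul_mul_assoc, mul_smul_comm, smul_smul, mul_one, mul_assoc]
  congr 1
  have : ((i + j)! : 𝕜) ≠ 0 := Nat.cast_ne_zero.2 (Nat.factorial_ne_zero _)
  field_simp

end Binomial

section Parity

theorem Nat.two_mul_add_one_injective : Function.Injective fun n : ℕ => 2 * n + 1 :=
  (add_left_injective 1).comp (mul_right_injective₀ two_ne_zero)

variable {E : Type*} [AddCommGroup E] [UniformSpace E] [IsUniformAddGroup E] [CompleteSpace E]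

theorem Summable.hasSum_neg_one_pow_zsmul {f : ℕ → E} (hf : Summable f) :
    HasSum (fun n => (-1 : ℤ) ^ n • f n) (∑' n, f (2 * n) - ∑' n, f (2 * n + 1)) := by
  have he := (hf.comp_injective (mul_right_injective₀ two_ne_zero)).hasSum
  have ho := (hf.comp_injective Nat.two_mul_add_one_injective).hasSum.neg
  rw [sub_eq_add_neg]
  exact .even_add_odd (by simpa [Function.comp_def, pow_mul] using he)
    (by simpa [Function.comp_def, pow_succ, pow_mul] using ho)

end Parity

section CauchyProduct

open Finset

variable {R : Type*} [NormedRing R] [CompleteSpace R]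

theorem tsum_mul_tsum_neg_one_pow_zsmul {f g : ℕ → R} (hf : Summable (‖f ·‖))
    (hg : Summable (‖g ·‖)) :
    (∑' n, (-1 : ℤ) ^ n • f n) * (∑' n, (-1 : ℤ) ^ n • g n) =
      ∑' n, (-1 : ℤ) ^ n • ∑ ij ∈ antidiagonal n, f ij.1 * g ij.2 := by
  have norm_twist (u : ℕ → R) : (fun n => ‖(-1 : ℤ) ^ n • u n‖) = (‖u ·‖) := by
    ext n
    rcases neg_one_pow_eq_or ℤ n with h | h <;> simp [h]
  rw [tsum_mul_tsum_eq_tsum_sum_antidiagonal_of_summable_norm (by rwa [norm_twist])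
    (by rwa [norm_twist])]
  refine tsum_congr fun n => ?_
  rw [smul_sum]
  refine sum_congr rfl fun ij hij => ?_
  rw [smul_mul_smul_comm, ← pow_add, mem_antidiagonal.mp hij]

theorem tsum_even_mul_tsum_odd_add_tsum_odd_mul_tsum_even [IsAddTorsionFree R] {f g : ℕ → R}
    (hf : Summable (‖f ·‖)) (hg : Summable (‖g ·‖)) :
    (∑' n, f (2 * n)) * (∑' n, g (2 * n + 1)) + (∑' n, f (2 * n + 1)) * (∑' n, g (2 * n)) =
      ∑' n, ∑ ij ∈ antidiagonal (2 * n + 1), f ij.1 * g ij.2 := by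
  set c := fun n => ∑ ij ∈ antidiagonal n, f ij.1 * g ij.2
  have hc : Summable c := (summable_norm_sum_mul_antidiagonal_of_summable_norm hf hg).of_norm
  have split (u : ℕ → R) (hu : Summable u) :
      ∑' n, u n = ∑' n, u (2 * n) + ∑' n, u (2 * n + 1) :=
    (tsum_even_add_odd (hu.comp_injective (mul_right_injective₀ two_ne_zero))
      (hu.comp_injective Nat.two_mul_add_one_injective)).symm
  have sum := tsum_mul_tsum_eq_tsum_sum_antidiagonal_of_summable_norm hf hg
  have diff := tsum_mul_tsum_neg_one_pow_zsmul hf hg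
  rw [split f hf.of_norm, split g hg.of_norm, split c hc] at sum
  rw [hf.of_norm.hasSum_neg_one_pow_zsmul.tsum_eq, hg.of_norm.hasSum_neg_one_pow_zsmul.tsum_eq,
    hc.hasSum_neg_one_pow_zsmul.tsum_eq] at diff
  set fe := ∑' n, f (2 * n)
  set fo := ∑' n, f (2 * n + 1)
  set ge := ∑' n, g (2 * n)
  set go := ∑' n, g (2 * n + 1)
  set ce := ∑' n, c (2 * n)
  set co := ∑' n, c (2 * n + 1)
  refine nsmul_right_injective two_ne_zero ?_
  simp only [two_nsmul]
  calc (fe * go + fo * ge) + (fe * go + fo * ge)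
      = (fe + fo) * (ge + go) - (fe - fo) * (ge - go) := by noncomm_ring
    _ = (ce + co) - (ce - co) := by rw [sum, diff]
    _ = co + co := by abel

end CauchyProduct

section Summability

variable (𝕜 : Type*) {A : Type*} [RCLike 𝕜] [NormedRing A] [NormedAlgebra 𝕜 A]

theorem summable_norm_inv_factorial_smul_pow_mul_pow (x D : A) :
    Summable fun n => ‖(n ! : 𝕜)⁻¹ • (x ^ n * D ^ n)‖ := by
  refine .of_norm_bounded_eventually_nat (Real.summable_pow_div_factorial (‖x‖ * ‖D‖))
    (Filter.eventually_atTop.2 ⟨1, fun n hn => ?_⟩)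
  rw [norm_norm, norm_smul, norm_inv, RCLike.norm_natCast, inv_mul_eq_div, mul_pow]
  gcongr
  calc ‖x ^ n * D ^ n‖ ≤ ‖x ^ n‖ * ‖D ^ n‖ := norm_mul_le _ _
    _ ≤ ‖x‖ ^ n * ‖D‖ ^ n := by gcongr <;> exact norm_pow_le' _ hn

variable {𝕜} in
theorem summable_norm_pow_div_factorial_smul_pow (c : 𝕜) (D : A) :
    Summable fun n => ‖(c ^ n / n ! : 𝕜) • D ^ n‖ := by
  refine .of_norm_bounded_eventually_nat (Real.summable_pow_div_factorial (‖c‖ * ‖D‖))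
    (Filter.eventually_atTop.2 ⟨1, fun n hn => ?_⟩)
  rw [norm_norm, norm_smul, norm_div, norm_pow, RCLike.norm_natCast, div_mul_eq_mul_div, mul_pow]
  gcongr
  exact norm_pow_le' _ hn

end Summability

/-- Constant-depth identity `cosh(ηD)·sinh(Dd) + sinh(ηD)·cosh(Dd) = sinh(hD)`
in a unital complex Banach algebra, with `h = d·1 + η`. -/
theorem stmt_2 (A : Type*) [NormedRing A] [NormedAlgebra ℂ A] [CompleteSpace A]
    (D η : A) (d : ℝ) (h : A) (hdef : h = (d : ℂ) • (1 : A) + η) :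
    (Summable fun n : ℕ => ‖(((2 * n)! : ℂ))⁻¹ • (η ^ (2 * n) * D ^ (2 * n))‖) ∧
    (Summable fun n : ℕ => ‖(((2 * n + 1)! : ℂ))⁻¹ • (η ^ (2 * n + 1) * D ^ (2 * n + 1))‖) ∧
    (Summable fun n : ℕ => ‖((d : ℂ) ^ (2 * n) / ((2 * n)! : ℂ)) • D ^ (2 * n)‖) ∧
    (Summable fun n : ℕ => ‖((d : ℂ) ^ (2 * n + 1) / ((2 * n + 1)! : ℂ)) • D ^ (2 * n + 1)‖) ∧
    (Summable fun n : ℕ => ‖(((2 * n + 1)! : ℂ))⁻¹ • (h ^ (2 * n + 1) * D ^ (2 * n + 1))‖) ∧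
    (∑' n : ℕ, (((2 * n)! : ℂ))⁻¹ • (η ^ (2 * n) * D ^ (2 * n))) *
        (∑' n : ℕ, ((d : ℂ) ^ (2 * n + 1) / ((2 * n + 1)! : ℂ)) • D ^ (2 * n + 1)) +
      (∑' n : ℕ, (((2 * n + 1)! : ℂ))⁻¹ • (η ^ (2 * n + 1) * D ^ (2 * n + 1))) *
        (∑' n : ℕ, ((d : ℂ) ^ (2 * n) / ((2 * n)! : ℂ)) • D ^ (2 * n)) =
      ∑' n : ℕ, (((2 * n + 1)! : ℂ))⁻¹ • (h ^ (2 * n + 1) * D ^ (2 * n + 1)) := by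
  subst hdef
  have hη := summable_norm_inv_factorial_smul_pow_mul_pow ℂ η D
  have hd := summable_norm_pow_div_factorial_smul_pow (d : ℂ) D
  have hh := summable_norm_inv_factorial_smul_pow_mul_pow ℂ ((d : ℂ) • (1 : A) + η) D
  have two_mul_inj := mul_right_injective₀ (M₀ := ℕ) two_ne_zero
  have := IsAddTorsionFree.of_isTorsionFree ℂ A
  refine ⟨hη.comp_injective two_mul_inj, hη.comp_injective Nat.two_mul_add_one_injective,
    hd.comp_injective two_mul_inj, hd.comp_injective Nat.two_mul_add_one_injective,
    hh.comp_injective Nat.two_mul_add_one_injective, ?_⟩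
  rw [tsum_even_mul_tsum_odd_add_tsum_odd_mul_tsum_even hη hd]
  exact tsum_congr fun n => (inv_factorial_smul_add_pow_mul_pow η D (d : ℂ) _).symm
end

section
/- Let A be a unital complex Banach algebra and let D, h, δ ∈ A with hδ = δh. Then the map F: ℝ → A defined by F(t) := Σ_{n≥0} D^{2n}(h+tδ)^{2n}/(2n)! (an absolutely convergent series for every t) is differentiable at t = 0, with derivative F'(0) = D·sinh(Dh)·δ, where sinh(Dh) := Σ_{n≥0} D^{2n+1}h^{2n+1}/(2n+1)!. -/
/-!
Write `c m t := D^m (h + tδ)^m / m!`. Because `h` and `δ` commute, `(h + tδ)^(m+1)` has derivative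
`(m+1) (h + tδ)^m δ`, hence `c (m+1)' = D · c m · δ`: differentiating the even subseries term by
term produces `D · sinh(D(h + tδ)) · δ`. Termwise differentiation is justified by
`‖c (m+1) t‖ ≤ (‖D‖ ‖h + tδ‖)^(m+1) / (m+1)!`, which is summable uniformly for `t` in a ball.
-/

open scoped Nat

theorem hasDerivAt_add_smul_pow {𝕜 A : Type*} [NontriviallyNormedField 𝕜] [NormedRing A]
    [NormedAlgebra 𝕜 A] {h δ : A} (hcomm : Commute h δ) (n : ℕ) (x : 𝕜) :
    HasDerivAt (fun t : 𝕜 => (h + t • δ) ^ n) (n • ((h + x • δ) ^ (n - 1) * δ)) x := by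
  have hline : HasDerivAt (fun t : 𝕜 => h + t • δ) δ x := by
    simpa using ((hasDerivAt_id x).smul_const δ).const_add h
  have hy : Commute (h + x • δ) δ := hcomm.add_left ((Commute.refl δ).smul_left x)
  convert hline.fun_pow' n using 1
  rw [Finset.sum_congr rfl fun i hi => ?_, Finset.sum_const, Finset.card_range]
  rw [mul_assoc, ← (hy.pow_left i).eq, ← mul_assoc, ← pow_add,
    Nat.sub_add_cancel (Nat.le_pred_of_lt (Finset.mem_range.mp hi)), Nat.pred_eq_sub_one]

theorem norm_add_smul_le_of_mem_ball {E : Type*} [SeminormedAddCommGroup E] [NormedSpace ℝ E]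
    (h δ : E) {x y : ℝ} (hy : y ∈ Metric.ball x 1) :
    ‖h + y • δ‖ ≤ ‖h + x • δ‖ + ‖δ‖ := by
  have hxy : ‖y - x‖ ≤ 1 := (Metric.mem_ball.mp hy).le
  calc ‖h + y • δ‖ = ‖(h + x • δ) + (y - x) • δ‖ := by rw [sub_smul]; abel_nf
    _ ≤ ‖h + x • δ‖ + ‖y - x‖ * ‖δ‖ := (norm_add_le _ _).trans_eq (by rw [norm_smul])
    _ ≤ ‖h + x • δ‖ + ‖δ‖ := by gcongr; exact mul_le_of_le_one_left (norm_nonneg _) hxy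

section OrderedExp

variable {A : Type*} [NormedRing A] [NormedAlgebra ℂ A]

/-- The terms of `exp(Dy) := ∑ D^m y^m / m!`; `cosh(Dy)` and `sinh(Dy)` are its even and odd
subseries. -/
noncomputable def orderedExpTerm (D y : A) (m : ℕ) : A := ((m ! : ℂ))⁻¹ • (D ^ m * y ^ m)

theorem orderedExpTerm_zero (D y : A) : orderedExpTerm D y 0 = 1 := by
  simp [orderedExpTerm]

theorem norm_orderedExpTerm_succ_le (D y : A) (m : ℕ) :
    ‖orderedExpTerm D y (m + 1)‖ ≤ (‖D‖ * ‖y‖) ^ (m + 1) / (m + 1)! := by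
  rw [orderedExpTerm, norm_smul, norm_inv, Complex.norm_natCast, mul_pow, inv_mul_eq_div]
  gcongr
  exact (norm_mul_le _ _).trans <| mul_le_mul (norm_pow_le' _ m.succ_pos)
    (norm_pow_le' _ m.succ_pos) (norm_nonneg _) (by positivity)

theorem summable_norm_orderedExpTerm (D y : A) :
    Summable fun m => ‖orderedExpTerm D y m‖ := by
  rw [← summable_nat_add_iff 1]
  exact .of_nonneg_of_le (fun _ => norm_nonneg _) (norm_orderedExpTerm_succ_le D y)
    ((summable_nat_add_iff 1).mpr (Real.summable_pow_div_factorial _))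

theorem hasDerivAt_orderedExpTerm_succ (D : A) {h δ : A} (hcomm : Commute h δ) (m : ℕ)
    (x : ℝ) :
    HasDerivAt (fun t : ℝ => orderedExpTerm D (h + t • δ) (m + 1))
      (D * orderedExpTerm D (h + x • δ) m * δ) x := by
  refine (((hasDerivAt_add_smul_pow hcomm (m + 1) x).const_mul (D ^ (m + 1))).const_smul
    (((m + 1)! : ℂ))⁻¹).congr_deriv ?_
  unfold orderedExpTerm
  rw [Nat.add_sub_cancel, ← Nat.cast_smul_eq_nsmul ℂ, mul_smul_comm, smul_smul]
  have hcoef : (((m + 1)! : ℂ))⁻¹ * (m + 1 : ℕ) = ((m ! : ℂ))⁻¹ := by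
    rw [Nat.factorial_succ, Nat.cast_mul]
    field_simp
  rw [hcoef, pow_succ']
  simp only [mul_smul_comm, smul_mul_assoc, mul_assoc]

variable [CompleteSpace A]

theorem hasDerivAt_tsum_orderedExpTerm (D : A) {h δ : A} (hcomm : Commute h δ) {f : ℕ → ℕ}
    (hf : Function.Injective f) (x : ℝ) :
    HasDerivAt (fun t : ℝ => ∑' n, orderedExpTerm D (h + t • δ) (f n + 2))
      (D * (∑' n, orderedExpTerm D (h + x • δ) (f n + 1)) * δ) x := by
  set R := ‖D‖ * (‖h + x • δ‖ + ‖δ‖)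
  have hbound : ∀ n, ∀ y ∈ Metric.ball x 1, ‖D * orderedExpTerm D (h + y • δ) (f n + 1) * δ‖ ≤
      ‖D‖ * (R ^ (f n + 1) / (f n + 1)!) * ‖δ‖ := fun n y hy => by
    refine (norm_mul₃_le ..).trans ?_
    gcongr
    refine (norm_orderedExpTerm_succ_le D _ _).trans ?_
    gcongr
    exact mul_le_mul_of_nonneg_left (norm_add_smul_le_of_mem_ball h δ hy) (norm_nonneg D)
  have hshift : ∀ k, Function.Injective fun n => f n + k := fun k _ _ h => hf (by simpa using h)
  have hu := (((Real.summable_pow_div_factorial R).comp_injective (hshift 1)).mul_left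
    ‖D‖).mul_right ‖δ‖
  have hterms := ((summable_norm_orderedExpTerm D (h + x • δ)).comp_injective (hshift 1)).of_norm
  rw [← hterms.tsum_mul_left, ← (hterms.mul_left D).tsum_mul_right]
  exact hasDerivAt_tsum_of_isPreconnected hu Metric.isOpen_ball (convex_ball x 1).isPreconnected
    (fun n y _ => hasDerivAt_orderedExpTerm_succ D hcomm (f n + 1) y) hbound
    (Metric.mem_ball_self one_pos)
    ((summable_norm_orderedExpTerm D _).comp_injective (hshift 2)).of_norm
    (Metric.mem_ball_self one_pos)

end OrderedExp

/-- First variation of `cosh(D(h+tδ))` at `t = 0`: the derivative is `D·sinh(Dh)·δ`,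
where `h` and `δ` commute but need not commute with `D`. -/
theorem stmt_4 (A : Type*) [NormedRing A] [NormedAlgebra ℂ A] [CompleteSpace A]
    (D h δ : A) (hcomm : h * δ = δ * h) :
    (∀ t : ℝ,
      Summable fun n : ℕ => ‖(((2 * n)! : ℂ))⁻¹ • (D ^ (2 * n) * (h + t • δ) ^ (2 * n))‖) ∧
    HasDerivAt
      (fun t : ℝ => ∑' n : ℕ, (((2 * n)! : ℂ))⁻¹ • (D ^ (2 * n) * (h + t • δ) ^ (2 * n)))
      (D * (∑' n : ℕ, (((2 * n + 1)! : ℂ))⁻¹ • (D ^ (2 * n + 1) * h ^ (2 * n + 1))) * δ)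
      0 := by
  have heven : Function.Injective fun n : ℕ => 2 * n := mul_right_injective₀ two_ne_zero
  have hsum (t : ℝ) : Summable fun n => ‖orderedExpTerm D (h + t • δ) (2 * n)‖ :=
    (summable_norm_orderedExpTerm D _).comp_injective heven
  have hsplit (t : ℝ) : ∑' n, orderedExpTerm D (h + t • δ) (2 * n) =
      1 + ∑' n, orderedExpTerm D (h + t • δ) (2 * n + 2) := by
    rw [(hsum t).of_norm.tsum_eq_zero_add, mul_zero, orderedExpTerm_zero]
    rfl
  refine ⟨hsum, ?_⟩
  have hderiv := (hasDerivAt_tsum_orderedExpTerm D hcomm heven 0).const_add 1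
  simp only [← hsplit, zero_smul, add_zero] at hderiv
  exact hderiv
end
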